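/- For every integer d ≥ 2 and for n divisible by d−1 (in the case d ≥ 3), the function f(x_1,...,x_n) := (−1)^{x_1·x_2···x_{d−1} + x_d···x_{2d−2} + ···} (grouping coordinates in blocks of size d−1 and summing their products) satisfies U^1(f) = o_n(1), U^d(f) = 1, and every coordinate i satisfies Inf_i(f) ≤ 1/2^{d−2} + o_n(1). -/
import Mathlib


open Finset
open scoped Classical

/-- Dimension-`d` Gowers uniformity of `f : {0,1}^n → ℝ`. -/
noncomputable def gowersU {n : ℕ} (d : ℕ) (f : (Fin n → ZMod 2) → ℝ) : ℝ :=
  (∑ x : Fin n → ZMod 2, ∑ y : Fin d → Fin n → ZMod 2,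
      ∏ S : Finset (Fin d), f (x + ∑ i ∈ S, y i)) / (2 ^ n * (2 ^ n : ℝ) ^ d)

/-- Influence of coordinate `i` for a Boolean-valued function. -/
noncomputable def boolInfluence {n : ℕ} (i : Fin n) (g : (Fin n → ZMod 2) → ℝ) : ℝ :=
  ((Finset.univ.filter fun x : Fin n → ZMod 2 =>
      g x ≠ g (x + Pi.single i 1)).card : ℝ) / 2 ^ n

/-- The function `(-1)^{x_1 x_2 ⋯ x_{d-1} + x_d ⋯ x_{2d-2} + ⋯}` obtained by grouping the
coordinates into consecutive blocks of size `d-1` and summing the products of the blocks. -/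
noncomputable def blockFun (d n : ℕ) : (Fin n → ZMod 2) → ℝ := fun x =>
  (-1 : ℝ) ^ (∑ j ∈ Finset.range (n / (d - 1)), ∏ i ∈ Finset.range (d - 1),
      (if h : j * (d - 1) + i < n then (x ⟨j * (d - 1) + i, h⟩).val else 0))

lemma zmod2_sum_powerset {ι K : Type*} [DecidableEq ι] [DecidableEq K] :
    ∀ (u : Finset ι) (V : Finset K) (a : ι → ZMod 2) (b : ι → K → ZMod 2),
      u.card < V.card →
      ∑ s ∈ V.powerset, ∏ i ∈ u, (a i + ∑ k ∈ s, b i k) = 0 := by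
  intro u
  induction u using Finset.induction with
  | empty =>
      intro V a b h
      simp only [Finset.prod_empty, Finset.sum_const, Finset.card_powerset, nsmul_eq_mul,
        mul_one]
      have : (2:ℕ) ∣ 2 ^ V.card := dvd_pow_self 2 (by omega)
      exact (ZMod.natCast_eq_zero_iff _ 2).mpr this
  | @insert i u hi ih =>
      intro V a b h
      have hcard : u.card < V.card := by
        rw [Finset.card_insert_of_notMem hi] at h; omega
      have expand : ∀ s ∈ V.powerset,
          ∏ j ∈ insert i u, (a j + ∑ k ∈ s, b j k)
            = a i * ∏ j ∈ u, (a j + ∑ k ∈ s, b j k)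
              + ∑ k ∈ V, (if k ∈ s then b i k * ∏ j ∈ u, (a j + ∑ k' ∈ s, b j k') else 0) := by
        intro s hs
        rw [Finset.prod_insert hi, add_mul, Finset.sum_mul]
        congr 1
        rw [← Finset.sum_filter]
        congr 1
        rw [Finset.filter_mem_eq_inter, Finset.inter_comm,
          Finset.inter_eq_left.mpr (Finset.mem_powerset.mp hs)]
      rw [Finset.sum_congr rfl expand, Finset.sum_add_distrib, ← Finset.mul_sum,
        ih V a b hcard, mul_zero, zero_add, Finset.sum_comm]
      apply Finset.sum_eq_zero
      intro k hk
      rw [← Finset.insert_erase hk, Finset.sum_powerset_insert (Finset.notMem_erase k V)]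
      have h1 : ∑ s ∈ (V.erase k).powerset, (if k ∈ s then b i k * ∏ j ∈ u, (a j + ∑ k' ∈ s, b j k') else 0) = 0 := by
        apply Finset.sum_eq_zero
        intro s hs
        rw [if_neg]
        intro hks
        exact Finset.notMem_erase k V (Finset.mem_powerset.mp hs hks)
      rw [h1, zero_add]
      have h2 : ∀ s ∈ (V.erase k).powerset,
          (if k ∈ insert k s then b i k * ∏ j ∈ u, (a j + ∑ k' ∈ insert k s, b j k') else 0)
          = b i k * ∏ j ∈ u, ((a j + b j k) + ∑ k' ∈ s, b j k') := by
        intro s hs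
        rw [if_pos (Finset.mem_insert_self k s)]
        congr 1
        apply Finset.prod_congr rfl
        intro j _
        rw [Finset.sum_insert (fun hks => Finset.notMem_erase k V (Finset.mem_powerset.mp hs hks)),
          add_assoc]
      rw [Finset.sum_congr rfl h2, ← Finset.mul_sum,
        ih (V.erase k) (fun j => a j + b j k) b (by rw [Finset.card_erase_of_mem hk]; rw [Finset.card_insert_of_notMem hi] at h; omega),
        mul_zero]


lemma coord_lt {m k j i : ℕ} (hj : j < m) (hi : i < k) : j * k + i < m * k := by
  calc j * k + i < j * k + k := by omega
  _ = (j+1) * k := by ring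
  _ ≤ m * k := Nat.mul_le_mul_right k (by omega)

def blockEquiv (m k : ℕ) (hk : 0 < k) : (Fin m → Fin k → ZMod 2) ≃ (Fin (m*k) → ZMod 2) where
  toFun u c := u ⟨c.val / k, by
      rw [Nat.div_lt_iff_lt_mul hk]; exact c.isLt⟩ ⟨c.val % k, Nat.mod_lt _ hk⟩
  invFun x j i := x ⟨j.val * k + i.val, coord_lt j.isLt i.isLt⟩
  left_inv u := by
    funext j i
    have h1 : ((j:ℕ) * k + (i:ℕ)) / k = (j:ℕ) := by
      rw [mul_comm (j:ℕ) k, Nat.mul_add_div hk, Nat.div_eq_of_lt i.isLt, add_zero]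
    have h2 : ((j:ℕ) * k + (i:ℕ)) % k = (i:ℕ) := by
      rw [mul_comm (j:ℕ) k, Nat.mul_add_mod, Nat.mod_eq_of_lt i.isLt]
    simp only [h1, h2, Fin.eta]
  right_inv x := by
    funext c
    have h : (c:ℕ) / k * k + (c:ℕ) % k = (c:ℕ) := Nat.div_add_mod' c.val k
    simp only [h, Fin.eta]

lemma blockFun_apply_equiv {d m : ℕ} (hd : 2 ≤ d) (u : Fin m → Fin (d-1) → ZMod 2) :
    blockFun d (m * (d-1)) (blockEquiv m (d-1) (by omega) u)
      = ∏ j : Fin m, (-1 : ℝ) ^ (∏ i : Fin (d-1), (u j i).val) := by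
  unfold blockFun
  rw [Nat.mul_div_cancel _ (by omega : 0 < d - 1), ← Finset.prod_pow_eq_pow_sum,
    ← Fin.prod_univ_eq_prod_range]
  apply Finset.prod_congr rfl
  intro j _
  congr 1
  rw [← Fin.prod_univ_eq_prod_range]
  apply Finset.prod_congr rfl
  intro i _
  rw [dif_pos (coord_lt j.isLt i.isLt)]
  congr 1
  show u _ _ = u j i
  congr 1
  · apply Fin.ext
    show ((j:ℕ) * (d-1) + (i:ℕ)) / (d-1) = j
    rw [mul_comm (j:ℕ), Nat.mul_add_div (by omega), Nat.div_eq_of_lt i.isLt, add_zero]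
  · apply Fin.ext
    show ((j:ℕ) * (d-1) + (i:ℕ)) % (d-1) = i
    rw [mul_comm (j:ℕ), Nat.mul_add_mod, Nat.mod_eq_of_lt i.isLt]

lemma sum_g (d : ℕ) (hd : 2 ≤ d) :
    ∑ v : Fin (d-1) → ZMod 2, (-1 : ℝ) ^ (∏ i : Fin (d-1), (v i).val)
      = 2 ^ (d-1) - 2 := by
  rw [← Finset.add_sum_erase _ _ (Finset.mem_univ (1 : Fin (d-1) → ZMod 2))]
  have h1 : (∏ i : Fin (d-1), ((1 : Fin (d-1) → ZMod 2) i).val) = 1 := by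
    simp [ZMod.val_one]
  have h2 : ∀ v ∈ Finset.univ.erase (1 : Fin (d-1) → ZMod 2),
      (-1 : ℝ) ^ (∏ i : Fin (d-1), (v i).val) = 1 := by
    intro v hv
    obtain ⟨i, hi⟩ : ∃ i, v i ≠ 1 := by
      by_contra hc
      push_neg at hc
      exact (Finset.mem_erase.mp hv).1 (funext hc)
    have : (v i).val = 0 := by
      have := ZMod.val_lt (v i)
      interval_cases h : (v i).val
      · rfl
      · exact absurd (ZMod.val_injective 2 (by rw [h, ZMod.val_one])) hi
    rw [Finset.prod_eq_zero (Finset.mem_univ i) this, pow_zero]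
  rw [Finset.sum_congr rfl h2, h1, pow_one, Finset.sum_const, Finset.card_erase_of_mem
    (Finset.mem_univ _), Finset.card_univ]
  simp [Fintype.card_fun]
  have : (1:ℕ) ≤ 2 ^ (d-1) := Nat.one_le_two_pow
  push_cast [this]
  ring

lemma sum_blockFun {d m : ℕ} (hd : 2 ≤ d) :
    ∑ x : Fin (m*(d-1)) → ZMod 2, blockFun d (m*(d-1)) x = ((2:ℝ) ^ (d-1) - 2) ^ m := by
  rw [← Equiv.sum_comp (blockEquiv m (d-1) (by omega)) (blockFun d (m*(d-1)))]
  rw [Finset.sum_congr rfl (fun u _ => blockFun_apply_equiv hd u)]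
  rw [← sum_g d hd, ← Fin.prod_const m, Finset.prod_univ_sum, Fintype.piFinset_univ]


lemma prod_subcube {n : ℕ} (d : ℕ) (hd : 2 ≤ d) (x : Fin n → ZMod 2)
    (y : Fin d → Fin n → ZMod 2) :
    ∏ S : Finset (Fin d), blockFun d n (x + ∑ i ∈ S, y i) = 1 := by
  unfold blockFun
  rw [Finset.prod_pow_eq_pow_sum]
  apply Even.neg_one_pow
  rw [Nat.even_iff, ← Nat.dvd_iff_mod_eq_zero, ← ZMod.natCast_eq_zero_iff]
  push_cast
  rw [Finset.sum_comm]
  apply Finset.sum_eq_zero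
  intro j _
  rw [← Finset.powerset_univ]
  have key := zmod2_sum_powerset (Finset.range (d-1)) (Finset.univ : Finset (Fin d))
    (fun i => if h : j * (d-1) + i < n then x ⟨_, h⟩ else 0)
    (fun i k => if h : j * (d-1) + i < n then y k ⟨_, h⟩ else 0)
    (by simp [Finset.card_univ]; omega)
  rw [← key]
  apply Finset.sum_congr rfl
  intro S _
  apply Finset.prod_congr rfl
  intro i _
  by_cases h : j * (d-1) + i < n
  · simp only [dif_pos h]
    rw [ZMod.natCast_val, ZMod.cast_id]
    simp [Finset.sum_apply]
  · simp only [dif_neg h]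
    simp


lemma gowersU_d_eq {n : ℕ} (d : ℕ) (hd : 2 ≤ d) : gowersU d (blockFun d n) = 1 := by
  unfold gowersU
  have : ∀ x : Fin n → ZMod 2, ∑ y : Fin d → Fin n → ZMod 2,
      ∏ S : Finset (Fin d), blockFun d n (x + ∑ i ∈ S, y i) = (2 ^ n : ℝ) ^ d := by
    intro x
    rw [Finset.sum_congr rfl (fun y _ => prod_subcube d hd x y), Finset.sum_const,
      Finset.card_univ]
    simp [Fintype.card_fun]
  rw [Finset.sum_congr rfl (fun x _ => this x), Finset.sum_const, Finset.card_univ]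
  simp only [Fintype.card_fun, ZMod.card, Fintype.card_fin, nsmul_eq_mul]
  push_cast
  rw [div_self (by positivity)]


lemma gowersU_one {n : ℕ} (f : (Fin n → ZMod 2) → ℝ) :
    gowersU 1 f = (∑ x : Fin n → ZMod 2, f x) ^ 2 / (2 ^ n * (2 ^ n : ℝ) ^ 1) := by
  unfold gowersU
  congr 1
  have huniv : (Finset.univ : Finset (Finset (Fin 1))) = {∅, {0}} := by decide
  have hprod : ∀ (x : Fin n → ZMod 2) (y : Fin 1 → Fin n → ZMod 2),
      ∏ S : Finset (Fin 1), f (x + ∑ i ∈ S, y i) = f x * f (x + y 0) := by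
    intro x y
    rw [huniv, Finset.prod_insert (by decide), Finset.prod_singleton]
    simp
  calc ∑ x : Fin n → ZMod 2, ∑ y : Fin 1 → Fin n → ZMod 2,
        ∏ S : Finset (Fin 1), f (x + ∑ i ∈ S, y i)
      = ∑ x : Fin n → ZMod 2, ∑ y : Fin 1 → Fin n → ZMod 2, f x * f (x + y 0) := by
        exact Finset.sum_congr rfl fun x _ => Finset.sum_congr rfl fun y _ => hprod x y
    _ = ∑ x : Fin n → ZMod 2, ∑ v : Fin n → ZMod 2, f x * f (x + v) := by
        apply Finset.sum_congr rfl
        intro x _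
        exact Fintype.sum_equiv (Equiv.funUnique (Fin 1) (Fin n → ZMod 2)) _ _ (fun y => rfl)
    _ = ∑ x : Fin n → ZMod 2, f x * ∑ v : Fin n → ZMod 2, f (x + v) := by
        simp [Finset.mul_sum]
    _ = ∑ x : Fin n → ZMod 2, f x * ∑ w : Fin n → ZMod 2, f w := by
        apply Finset.sum_congr rfl
        intro x _
        congr 1
        exact Fintype.sum_equiv (Equiv.addLeft x) _ _ (fun v => rfl)
    _ = (∑ x : Fin n → ZMod 2, f x) ^ 2 := by
        rw [← Finset.sum_mul, sq]


lemma zmod2_cases : ∀ q : ZMod 2, q = 0 ∨ q = 1 := by decide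

lemma neg_one_pow_ne_iff (a b : ℕ) :
    ((-1:ℝ)^a ≠ (-1)^b) ↔ ((a : ZMod 2) ≠ (b : ZMod 2)) := by
  rw [not_iff_not, ZMod.natCast_eq_natCast_iff, Nat.ModEq]
  rcases Nat.even_or_odd a with ha | ha <;> rcases Nat.even_or_odd b with hb | hb
  · rw [ha.neg_one_pow, hb.neg_one_pow, Nat.even_iff.mp ha, Nat.even_iff.mp hb]
    simp
  · rw [ha.neg_one_pow, hb.neg_one_pow, Nat.even_iff.mp ha, Nat.odd_iff.mp hb]
    norm_num
  · rw [ha.neg_one_pow, hb.neg_one_pow, Nat.odd_iff.mp ha, Nat.even_iff.mp hb]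
    norm_num
  · rw [ha.neg_one_pow, hb.neg_one_pow, Nat.odd_iff.mp ha, Nat.odd_iff.mp hb]
    simp

lemma count_ones {α : Type*} [Fintype α] [DecidableEq α] (T : Finset α)
    (P : (α → ZMod 2) → Prop) [DecidablePred P] (hP : ∀ x, P x ↔ ∀ c ∈ T, x c = 1) :
    (Finset.univ.filter P).card = 2 ^ (Fintype.card α - T.card) := by
  have h : Finset.univ.filter P
      = Fintype.piFinset (fun c => if c ∈ T then ({1} : Finset (ZMod 2)) else Finset.univ) := by
    ext x
    simp only [Finset.mem_filter, Finset.mem_univ, true_and, Fintype.mem_piFinset, hP]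
    constructor
    · intro hx c
      split_ifs with hc
      · simp [hx c hc]
      · simp
    · intro hx c hc
      have := hx c
      rw [if_pos hc] at this
      simpa using this
  rw [h, Fintype.card_piFinset]
  have h2 : ∀ c : α, (if c ∈ T then ({1} : Finset (ZMod 2)) else Finset.univ).card
      = if c ∈ T then 1 else 2 := by
    intro c
    split_ifs <;> simp
  rw [Finset.prod_congr rfl (fun c _ => h2 c), ← Finset.prod_mul_prod_compl T,
    Finset.prod_congr rfl (fun c hc => if_pos hc),
    Finset.prod_congr rfl (fun c hc => if_neg (Finset.mem_compl.mp hc)),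
    Finset.prod_const_one, one_mul, Finset.prod_const, Finset.card_compl]

lemma influence_eq {d n m : ℕ} (hd : 2 ≤ d) (hm : n = m * (d-1)) (i : Fin n) :
    boolInfluence i (blockFun d n) = 1 / 2 ^ (d-2) := by
  have hk : 0 < d - 1 := by omega
  set k := d - 1 with hkdef
  have hn0 : 0 < n := i.pos
  have hm0 : 0 < m := by
    rcases Nat.eq_zero_or_pos m with h | h
    · subst h; simp at hm; omega
    · exact h
  set j₀ := i.val / k with hj₀def
  set r := i.val % k with hrdef
  have hj₀ : j₀ < m := (Nat.div_lt_iff_lt_mul hk).mpr (hm ▸ i.isLt)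
  have hr : r < k := Nat.mod_lt _ hk
  have hlt : ∀ c ∈ ((Finset.range k).erase r).image (fun i' => j₀ * k + i'), c < n := by
    intro c hc
    obtain ⟨i', hi', rfl⟩ := Finset.mem_image.mp hc
    have : i' < k := Finset.mem_range.mp (Finset.mem_of_mem_erase hi')
    exact hm ▸ coord_lt hj₀ this
  set T : Finset (Fin n) := Finset.attachFin _ hlt with hT
  have hTcard : T.card = d - 2 := by
    rw [hT, Finset.card_attachFin, Finset.card_image_of_injective _
      (fun a b hab => Nat.add_left_cancel hab),
      Finset.card_erase_of_mem (Finset.mem_range.mpr hr), Finset.card_range]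
    omega
  have hnk : n / k = m := by rw [hm, Nat.mul_div_cancel _ hk]
  -- the ZMod-2 exponent function
  set Fz : (Fin n → ZMod 2) → ZMod 2 := fun z =>
    ∑ j ∈ Finset.range m, ∏ i' ∈ Finset.range k,
      (if h : j * k + i' < n then z ⟨j * k + i', h⟩ else 0) with hFz
  have hcast : ∀ z : Fin n → ZMod 2,
      ((∑ j ∈ Finset.range (n / k), ∏ i' ∈ Finset.range k,
        (if h : j * k + i' < n then (z ⟨j * k + i', h⟩).val else 0) : ℕ) : ZMod 2) = Fz z := by
    intro z
    rw [hnk]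
    push_cast
    apply Finset.sum_congr rfl
    intro j _
    apply Finset.prod_congr rfl
    intro i' _
    by_cases h : j * k + i' < n
    · simp only [dif_pos h]
      rw [ZMod.natCast_val, ZMod.cast_id]
    · simp only [dif_neg h]
      simp
  have hQrw : ∀ z : Fin n → ZMod 2, ∏ i' ∈ (Finset.range k).erase r,
      (if h : j₀ * k + i' < n then z ⟨j₀ * k + i', h⟩ else 0) = ∏ c ∈ T, z c := by
    intro z
    apply Finset.prod_bij (fun a ha => (⟨j₀ * k + a,
      hm ▸ coord_lt hj₀ (Finset.mem_range.mp (Finset.mem_of_mem_erase ha))⟩ : Fin n))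
    · intro a ha
      rw [hT, Finset.mem_attachFin]
      exact Finset.mem_image.mpr ⟨a, ha, rfl⟩
    · intro a₁ h₁ a₂ h₂ hab
      exact Nat.add_left_cancel (congrArg Fin.val hab)
    · intro c hc
      rw [hT, Finset.mem_attachFin] at hc
      obtain ⟨a, ha, hav⟩ := Finset.mem_image.mp hc
      exact ⟨a, ha, Fin.ext hav⟩
    · intro a ha
      rw [dif_pos]
  have hir : j₀ * k + r = i.val := Nat.div_add_mod' i.val k
  have hdiff : ∀ z : Fin n → ZMod 2,
      Fz (z + Pi.single i 1) = Fz z + ∏ c ∈ T, z c := by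
    intro z
    set z' : Fin n → ZMod 2 := z + Pi.single i 1 with hz'
    have hsplit : ∀ w : Fin n → ZMod 2, Fz w
        = (∏ i' ∈ Finset.range k, (if h : j₀ * k + i' < n then w ⟨j₀ * k + i', h⟩ else 0))
          + ∑ j ∈ (Finset.range m).erase j₀, ∏ i' ∈ Finset.range k,
              (if h : j * k + i' < n then w ⟨j * k + i', h⟩ else 0) :=
      fun w => (Finset.add_sum_erase _ _ (Finset.mem_range.mpr hj₀)).symm
    have hrest : ∑ j ∈ (Finset.range m).erase j₀, ∏ i' ∈ Finset.range k,
          (if h : j * k + i' < n then z' ⟨j * k + i', h⟩ else 0)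
        = ∑ j ∈ (Finset.range m).erase j₀, ∏ i' ∈ Finset.range k,
          (if h : j * k + i' < n then z ⟨j * k + i', h⟩ else 0) := by
      apply Finset.sum_congr rfl
      intro j hj
      apply Finset.prod_congr rfl
      intro i' hi'
      have hjm : j < m := Finset.mem_range.mp (Finset.mem_of_mem_erase hj)
      have hik : i' < k := Finset.mem_range.mp hi'
      have hlt' : j * k + i' < n := hm ▸ coord_lt hjm hik
      rw [dif_pos hlt', dif_pos hlt']
      have hne : (⟨j * k + i', hlt'⟩ : Fin n) ≠ i := by
        intro hc
        have hv : j * k + i' = i.val := congrArg Fin.val hc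
        have hdiv : (j * k + i') / k = j := by
          rw [mul_comm j k, Nat.mul_add_div hk, Nat.div_eq_of_lt hik, add_zero]
        rw [hv] at hdiv
        apply Finset.ne_of_mem_erase hj
        rw [hj₀def]
        exact hdiv.symm
      rw [hz', Pi.add_apply, Pi.single_eq_of_ne hne, add_zero]
    have hblock : ∏ i' ∈ Finset.range k,
          (if h : j₀ * k + i' < n then z' ⟨j₀ * k + i', h⟩ else 0)
        = (∏ i' ∈ Finset.range k, (if h : j₀ * k + i' < n then z ⟨j₀ * k + i', h⟩ else 0))
          + ∏ c ∈ T, z c := by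
      rw [← Finset.mul_prod_erase _ _ (Finset.mem_range.mpr hr),
        ← Finset.mul_prod_erase _ _ (Finset.mem_range.mpr hr)]
      have hltr : j₀ * k + r < n := by rw [hir]; exact i.isLt
      have hfin : (⟨j₀ * k + r, hltr⟩ : Fin n) = i := Fin.ext hir
      rw [dif_pos hltr, dif_pos hltr, hfin]
      have herase : ∏ i' ∈ (Finset.range k).erase r,
            (if h : j₀ * k + i' < n then z' ⟨j₀ * k + i', h⟩ else 0)
          = ∏ c ∈ T, z c := by
        rw [← hQrw z]
        apply Finset.prod_congr rfl
        intro i' hi'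
        have hik : i' < k := Finset.mem_range.mp (Finset.mem_of_mem_erase hi')
        have hlt' : j₀ * k + i' < n := hm ▸ coord_lt hj₀ hik
        rw [dif_pos hlt', dif_pos hlt']
        have hne : (⟨j₀ * k + i', hlt'⟩ : Fin n) ≠ i := by
          intro hc
          have hv : j₀ * k + i' = i.val := congrArg Fin.val hc
          have hmod : (j₀ * k + i') % k = i' := by
            rw [mul_comm j₀ k, Nat.mul_add_mod, Nat.mod_eq_of_lt hik]
          rw [hv] at hmod
          apply Finset.ne_of_mem_erase hi'
          rw [hrdef]
          exact hmod.symm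
        rw [hz', Pi.add_apply, Pi.single_eq_of_ne hne, add_zero]
      rw [herase, hQrw z, hz', Pi.add_apply, Pi.single_eq_same]
      ring
    rw [hsplit z', hsplit z, hrest, hblock]
    ring
  have hcond : ∀ x : Fin n → ZMod 2,
      (blockFun d n x ≠ blockFun d n (x + Pi.single i 1)) ↔ (∀ c ∈ T, x c = 1) := by
    intro x
    simp only [blockFun]
    rw [← hkdef, neg_one_pow_ne_iff, hcast x, hcast (x + Pi.single i 1), hdiff x, ne_eq,
      left_eq_add]
    constructor
    · intro h0 c hc
      rcases zmod2_cases (x c) with h | h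
      · exact absurd (Finset.prod_eq_zero hc h) h0
      · exact h
    · intro hall
      rw [Finset.prod_eq_one hall]
      exact one_ne_zero
  unfold boolInfluence
  rw [count_ones T _ hcond, hTcard, Fintype.card_fin]
  have hge : d - 2 ≤ n := by
    have : k ≤ m * k := Nat.le_mul_of_pos_left k hm0
    omega
  rw [div_eq_div_iff (by positivity) (by positivity)]
  push_cast
  rw [one_mul, ← pow_add]
  congr 1
  omega

theorem blockFun_gowers_tight (d : ℕ) (hd : 2 ≤ d) (ε : ℝ) (hε : 0 < ε) :
    ∃ N : ℕ, ∀ n ≥ N, (d - 1) ∣ n →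
      gowersU 1 (blockFun d n) ≤ ε ∧
      gowersU d (blockFun d n) = 1 ∧
      ∀ i : Fin n, boolInfluence i (blockFun d n) ≤ 1 / 2 ^ (d - 2) + ε := by
  have h2 : (2:ℝ) ≤ 2 ^ (d-1) := by
    calc (2:ℝ) = 2 ^ 1 := (pow_one 2).symm
    _ ≤ 2 ^ (d-1) := pow_le_pow_right₀ (by norm_num) (by omega)
  set c : ℝ := (2 ^ (d-1) - 2) / 2 ^ (d-1) with hc
  have hc0 : 0 ≤ c := by
    apply div_nonneg _ (by positivity)
    linarith
  have hc1 : c < 1 := by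
    rw [hc, div_lt_one (by positivity)]
    linarith
  obtain ⟨M, hM⟩ := exists_pow_lt_of_lt_one hε hc1
  refine ⟨(d-1) * (M+1), fun n hn hdvd => ?_⟩
  obtain ⟨m, hm⟩ := hdvd
  rw [mul_comm] at hm
  subst hm
  have hm1 : M + 1 ≤ m := by
    by_contra hcon
    push_neg at hcon
    have h1 : m * (d-1) ≤ M * (d-1) := Nat.mul_le_mul_right _ (by omega)
    have h2 : (d-1) * (M+1) ≤ m * (d-1) := hn
    nlinarith [Nat.sub_pos_of_lt hd]
  refine ⟨?_, gowersU_d_eq d hd, fun i => ?_⟩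
  · rw [gowersU_one, sum_blockFun hd, pow_one]
    have h2n : (2:ℝ) ^ (m * (d-1)) = ((2:ℝ) ^ (d-1)) ^ m := by
      rw [← pow_mul, mul_comm]
    rw [h2n]
    have hBne : ((2:ℝ) ^ (d-1)) ^ m ≠ 0 := by positivity
    have hkey : (((2:ℝ) ^ (d-1) - 2) ^ m) ^ 2 / (((2:ℝ) ^ (d-1)) ^ m * ((2:ℝ) ^ (d-1)) ^ m)
        = (c ^ m) ^ 2 := by
      rw [hc, div_pow, div_pow]
      congr 1
      ring
    rw [hkey, ← pow_mul]
    calc c ^ (m * 2) ≤ c ^ M := pow_le_pow_of_le_one hc0 hc1.le (by omega)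
    _ ≤ ε := hM.le
  · rw [influence_eq hd rfl i]
    linarith
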